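/- arXiv:2101.12370 — 3 statements merged into one kernel-verified Lean document; each statement's English description precedes it below -/
import Mathlib

section
/- Tensorization of Wyner's common information, subadditivity direction: Let X₁, X₂, Y₁, Y₂, U₁, U₂ be random variables on a common probability space taking values in finite sets, and suppose I(X₁,Y₁,U₁ ; X₂,Y₂,U₂) = 0, I(X₁;Y₁|U₁) = 0, and I(X₂;Y₂|U₂) = 0. Then there exists a random variable V on the same probability space, taking values in a finite set, such that I(X₁,X₂ ; Y₁,Y₂ | V) = 0 and I(V ; X₁,X₂,Y₁,Y₂) ≤ I(U₁ ; X₁,Y₁) + I(U₂ ; X₂,Y₂). -/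
open MeasureTheory

/-- Shannon entropy (in bits) of a discrete random variable `X` under measure `μ`,
with the convention `0 · log 0 = 0`. -/
noncomputable def ent {Ω : Type*} [MeasurableSpace Ω] (μ : Measure Ω) {S : Type*}
    (X : Ω → S) : ℝ :=
  ∑' s : S, -((μ (X ⁻¹' {s})).toReal * Real.logb 2 (μ (X ⁻¹' {s})).toReal)

/-- Conditional entropy `H(X | Y)`. -/
noncomputable def condEnt {Ω : Type*} [MeasurableSpace Ω] (μ : Measure Ω) {S T : Type*}
    (X : Ω → S) (Y : Ω → T) : ℝ :=
  ent μ (fun ω => (X ω, Y ω)) - ent μ Y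

/-- Mutual information `I(X ; Y)`. -/
noncomputable def mi {Ω : Type*} [MeasurableSpace Ω] (μ : Measure Ω) {S T : Type*}
    (X : Ω → S) (Y : Ω → T) : ℝ :=
  ent μ X + ent μ Y - ent μ (fun ω => (X ω, Y ω))

/-- Conditional mutual information `I(X ; Y | Z)`. -/
noncomputable def cmi {Ω : Type*} [MeasurableSpace Ω] (μ : Measure Ω) {S T V : Type*}
    (X : Ω → S) (Y : Ω → T) (Z : Ω → V) : ℝ :=
  ent μ (fun ω => (X ω, Z ω)) + ent μ (fun ω => (Y ω, Z ω))
    - ent μ (fun ω => (X ω, Y ω, Z ω)) - ent μ Z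

/-- A function into a discrete value space is a random variable iff every
preimage of a point is measurable. -/
def DMeasurable {Ω : Type*} [MeasurableSpace Ω] {S : Type*} (X : Ω → S) : Prop :=
  ∀ s : S, MeasurableSet (X ⁻¹' {s})

/-- Two discrete random variables (possibly on different probability spaces)
are identically distributed. -/
def IdentDist {Ω Ω' : Type*} [MeasurableSpace Ω] [MeasurableSpace Ω'] (μ : Measure Ω)
    (ν : Measure Ω') {S : Type*} (X : Ω → S) (Y : Ω' → S) : Prop :=
  ∀ s : S, μ (X ⁻¹' {s}) = ν (Y ⁻¹' {s})

lemma dm_pair {Ω S T : Type*} [MeasurableSpace Ω] {X : Ω → S} {Y : Ω → T}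
    (hX : DMeasurable X) (hY : DMeasurable Y) :
    DMeasurable (fun ω => (X ω, Y ω)) := by
  rintro ⟨s, t⟩
  have : (fun ω => (X ω, Y ω)) ⁻¹' {(s, t)} = X ⁻¹' {s} ∩ Y ⁻¹' {t} := by
    ext ω; simp [Prod.ext_iff]
  rw [this]; exact (hX s).inter (hY t)

lemma dm_comp {Ω S T : Type*} [MeasurableSpace Ω] [Fintype S] {X : Ω → S}
    (hX : DMeasurable X) (f : S → T) : DMeasurable (fun ω => f (X ω)) := by
  intro t
  have : (fun ω => f (X ω)) ⁻¹' {t} = ⋃ (s : S) (_ : f s = t), X ⁻¹' {s} := by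
    ext ω; simp [eq_comm]
  rw [this]
  exact MeasurableSet.iUnion fun s => MeasurableSet.iUnion fun _ => hX s

lemma ent_comp_inj {Ω S T : Type*} [MeasurableSpace Ω] (μ : Measure Ω)
    [Fintype S] [Fintype T] {X : Ω → S} {Y : Ω → T} (g : S → T)
    (hg : Function.Injective g) (hXY : ∀ ω, Y ω = g (X ω)) : ent μ Y = ent μ X := by
  classical
  rw [ent, ent, tsum_fintype, tsum_fintype]
  have key : ∀ s : S, Y ⁻¹' {g s} = X ⁻¹' {s} := by
    intro s; ext ω; simp [hXY, hg.eq_iff]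
  have h0 : ∀ t ∈ Finset.univ, t ∉ Finset.univ.image g →
      -((μ (Y ⁻¹' {t})).toReal * Real.logb 2 (μ (Y ⁻¹' {t})).toReal) = 0 := by
    intro t _ ht
    have : Y ⁻¹' {t} = ∅ := by
      ext ω
      simp only [Set.mem_preimage, Set.mem_singleton_iff, Set.mem_empty_iff_false, iff_false]
      intro h
      exact ht (Finset.mem_image.mpr ⟨X ω, Finset.mem_univ _, by rw [← hXY, h]⟩)
    simp [this]
  rw [← Finset.sum_subset (Finset.subset_univ (Finset.univ.image g)) h0]
  rw [Finset.sum_image (fun a _ b _ h => hg h)]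
  exact Finset.sum_congr rfl fun s _ => by rw [key]

lemma sum_swap23 {S T V : Type*} [Fintype S] [Fintype T] [Fintype V] (f : S → T → V → ℝ) :
    ∑ s, ∑ t, ∑ v, f s t v = ∑ s, ∑ v, ∑ t, f s t v :=
  Finset.sum_congr rfl fun _ _ => Finset.sum_comm

lemma sum_comm3 {S T V : Type*} [Fintype S] [Fintype T] [Fintype V] (f : S → T → V → ℝ) :
    ∑ s, ∑ t, ∑ v, f s t v = ∑ v, ∑ s, ∑ t, f s t v := by
  rw [sum_swap23]; exact Finset.sum_comm

lemma sum_rot {S T V : Type*} [Fintype S] [Fintype T] [Fintype V] (f : S → T → V → ℝ) :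
    ∑ s, ∑ t, ∑ v, f s t v = ∑ t, ∑ v, ∑ s, f s t v := by
  rw [Finset.sum_comm]
  exact Finset.sum_congr rfl fun _ _ => Finset.sum_comm

lemma log_bound {a b c d L : ℝ} (ha : 0 < a) (hb : 0 < b) (hc : 0 < c) (hd : 0 < d)
    (hL : 0 < L) :
    (c - a * b / d) / L ≤
      -(c * (Real.log a / L)) + -(c * (Real.log b / L)) - -(c * (Real.log c / L))
        - -(c * (Real.log d / L)) := by
  have hR : 0 < a * b / (c * d) := by positivity
  have hlog := Real.log_le_sub_one_of_pos hR
  have hcomb : Real.log (a * b / (c * d))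
      = Real.log a + Real.log b - Real.log c - Real.log d := by
    rw [Real.log_div (mul_pos ha hb).ne' (mul_pos hc hd).ne', Real.log_mul ha.ne' hb.ne',
      Real.log_mul hc.ne' hd.ne']
    ring
  have h2 : c * Real.log (a * b / (c * d)) ≤ c * (a * b / (c * d) - 1) :=
    mul_le_mul_of_nonneg_left hlog hc.le
  have h3 : c * (a * b / (c * d) - 1) = a * b / d - c := by
    field_simp
  rw [hcomb, h3] at h2
  calc (c - a * b / d) / L
      ≤ (c * (Real.log c + Real.log d - Real.log a - Real.log b)) / L := by
        apply (div_le_div_iff_of_pos_right hL).mpr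
        nlinarith [h2]
    _ = -(c * (Real.log a / L)) + -(c * (Real.log b / L)) - -(c * (Real.log c / L))
        - -(c * (Real.log d / L)) := by ring

lemma cmi_nonneg {Ω S T V : Type*} [MeasurableSpace Ω] (μ : Measure Ω)
    [IsProbabilityMeasure μ] [Fintype S] [Fintype T] [Fintype V]
    (X : Ω → S) (Y : Ω → T) (Z : Ω → V)
    (hX : DMeasurable X) (hY : DMeasurable Y) (hZ : DMeasurable Z) :
    0 ≤ cmi μ X Y Z := by
  classical
  set p : S → T → V → ℝ :=
    fun s t v => (μ (X ⁻¹' {s} ∩ Y ⁻¹' {t} ∩ Z ⁻¹' {v})).toReal with hpdef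
  have hpnn : ∀ s t v, 0 ≤ p s t v := fun s t v => ENNReal.toReal_nonneg
  set qxz : S → V → ℝ := fun s v => ∑ t, p s t v with hqxzdef
  set qyz : T → V → ℝ := fun t v => ∑ s, p s t v with hqyzdef
  set qz : V → ℝ := fun v => ∑ s, qxz s v with hqzdef
  have hqxznn : ∀ s v, 0 ≤ qxz s v := fun s v => Finset.sum_nonneg fun t _ => hpnn s t v
  have hqyznn : ∀ t v, 0 ≤ qyz t v := fun t v => Finset.sum_nonneg fun s _ => hpnn s t v
  have hqznn : ∀ v, 0 ≤ qz v := fun v => Finset.sum_nonneg fun s _ => hqxznn s v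
  have hmeas : ∀ s t v, MeasurableSet (X ⁻¹' {s} ∩ Y ⁻¹' {t} ∩ Z ⁻¹' {v}) :=
    fun s t v => ((hX s).inter (hY t)).inter (hZ v)
  -- marginal identities
  have hmxz : ∀ s v, (μ (X ⁻¹' {s} ∩ Z ⁻¹' {v})).toReal = qxz s v := by
    intro s v
    have hU : X ⁻¹' {s} ∩ Z ⁻¹' {v} = ⋃ t, (X ⁻¹' {s} ∩ Y ⁻¹' {t} ∩ Z ⁻¹' {v}) := by
      ext ω; simp [Set.mem_iUnion]
    have hd : Pairwise (Function.onFun Disjoint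
        (fun t => X ⁻¹' {s} ∩ Y ⁻¹' {t} ∩ Z ⁻¹' {v})) := by
      intro t t' h
      apply Set.disjoint_left.mpr
      intro ω hω hω'
      simp only [Set.mem_inter_iff, Set.mem_preimage, Set.mem_singleton_iff] at hω hω'
      exact h (hω.1.2.symm.trans hω'.1.2)
    rw [hU, measure_iUnion hd (fun t => hmeas s t v), tsum_fintype,
      ENNReal.toReal_sum (fun t _ => measure_ne_top μ _)]
  have hmyz : ∀ t v, (μ (Y ⁻¹' {t} ∩ Z ⁻¹' {v})).toReal = qyz t v := by
    intro t v
    have hU : Y ⁻¹' {t} ∩ Z ⁻¹' {v} = ⋃ s, (X ⁻¹' {s} ∩ Y ⁻¹' {t} ∩ Z ⁻¹' {v}) := by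
      ext ω; simp [Set.mem_iUnion]
    have hd : Pairwise (Function.onFun Disjoint
        (fun s => X ⁻¹' {s} ∩ Y ⁻¹' {t} ∩ Z ⁻¹' {v})) := by
      intro s s' h
      apply Set.disjoint_left.mpr
      intro ω hω hω'
      simp only [Set.mem_inter_iff, Set.mem_preimage, Set.mem_singleton_iff] at hω hω'
      exact h (hω.1.1.symm.trans hω'.1.1)
    rw [hU, measure_iUnion hd (fun s => hmeas s t v), tsum_fintype,
      ENNReal.toReal_sum (fun s _ => measure_ne_top μ _)]
  have hmz : ∀ v, (μ (Z ⁻¹' {v})).toReal = qz v := by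
    intro v
    have hU : Z ⁻¹' {v} = ⋃ s, (X ⁻¹' {s} ∩ Z ⁻¹' {v}) := by
      ext ω; simp [Set.mem_iUnion]
    have hd : Pairwise (Function.onFun Disjoint (fun s => X ⁻¹' {s} ∩ Z ⁻¹' {v})) := by
      intro s s' h
      apply Set.disjoint_left.mpr
      intro ω hω hω'
      simp only [Set.mem_inter_iff, Set.mem_preimage, Set.mem_singleton_iff] at hω hω'
      exact h (hω.1.symm.trans hω'.1)
    rw [hU, measure_iUnion hd (fun s => (hX s).inter (hZ v)), tsum_fintype,
      ENNReal.toReal_sum (fun s _ => measure_ne_top μ _)]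
    exact Finset.sum_congr rfl fun s _ => hmxz s v
  have htot : ∑ v, qz v = 1 := by
    have hU : (Set.univ : Set Ω) = ⋃ v, Z ⁻¹' {v} := by
      ext ω; simp [Set.mem_iUnion]
    have hd : Pairwise (Function.onFun Disjoint (fun v : V => Z ⁻¹' {v})) := by
      intro v v' h
      apply Set.disjoint_left.mpr
      intro ω hω hω'
      simp only [Set.mem_preimage, Set.mem_singleton_iff] at hω hω'
      exact h (hω.symm.trans hω')
    have : (μ (Set.univ : Set Ω)).toReal = ∑ v, (μ (Z ⁻¹' {v})).toReal := by
      rw [hU, measure_iUnion hd (fun v => hZ v), tsum_fintype,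
        ENNReal.toReal_sum (fun v _ => measure_ne_top μ _)]
    rw [measure_univ] at this
    simp only [ENNReal.toReal_one] at this
    calc ∑ v, qz v = ∑ v, (μ (Z ⁻¹' {v})).toReal :=
          Finset.sum_congr rfl fun v _ => (hmz v).symm
      _ = 1 := this.symm

  -- entropy expressions as triple sums
  have hHxz : ent μ (fun ω => (X ω, Z ω)) =
      ∑ s, ∑ t, ∑ v, -(p s t v * Real.logb 2 (qxz s v)) := by
    rw [sum_swap23]
    rw [ent, tsum_fintype, Fintype.sum_prod_type]
    refine Finset.sum_congr rfl fun s _ => Finset.sum_congr rfl fun v _ => ?_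
    have hpre : (fun ω => (X ω, Z ω)) ⁻¹' {(s, v)} = X ⁻¹' {s} ∩ Z ⁻¹' {v} := by
      ext ω; simp [Prod.ext_iff]
    rw [hpre, hmxz]
    calc -(qxz s v * Real.logb 2 (qxz s v))
        = -((∑ t, p s t v) * Real.logb 2 (qxz s v)) := rfl
      _ = -(∑ t, p s t v * Real.logb 2 (qxz s v)) := by rw [Finset.sum_mul]
      _ = ∑ t, -(p s t v * Real.logb 2 (qxz s v)) := by rw [Finset.sum_neg_distrib]
  have hHyz : ent μ (fun ω => (Y ω, Z ω)) =
      ∑ s, ∑ t, ∑ v, -(p s t v * Real.logb 2 (qyz t v)) := by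
    rw [sum_rot]
    rw [ent, tsum_fintype, Fintype.sum_prod_type]
    refine Finset.sum_congr rfl fun t _ => Finset.sum_congr rfl fun v _ => ?_
    have hpre : (fun ω => (Y ω, Z ω)) ⁻¹' {(t, v)} = Y ⁻¹' {t} ∩ Z ⁻¹' {v} := by
      ext ω; simp [Prod.ext_iff]
    rw [hpre, hmyz]
    calc -(qyz t v * Real.logb 2 (qyz t v))
        = -((∑ s, p s t v) * Real.logb 2 (qyz t v)) := rfl
      _ = -(∑ s, p s t v * Real.logb 2 (qyz t v)) := by rw [Finset.sum_mul]
      _ = ∑ s, -(p s t v * Real.logb 2 (qyz t v)) := by rw [Finset.sum_neg_distrib]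
  have hHz : ent μ Z = ∑ s, ∑ t, ∑ v, -(p s t v * Real.logb 2 (qz v)) := by
    rw [sum_comm3]
    rw [ent, tsum_fintype]
    refine Finset.sum_congr rfl fun v _ => ?_
    rw [hmz]
    calc -(qz v * Real.logb 2 (qz v))
        = -((∑ s, ∑ t, p s t v) * Real.logb 2 (qz v)) := rfl
      _ = ∑ s, -((∑ t, p s t v) * Real.logb 2 (qz v)) := by
          rw [Finset.sum_mul, Finset.sum_neg_distrib]
      _ = ∑ s, ∑ t, -(p s t v * Real.logb 2 (qz v)) := by
          refine Finset.sum_congr rfl fun s _ => ?_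
          rw [Finset.sum_mul, Finset.sum_neg_distrib]
  have hHxyz : ent μ (fun ω => (X ω, Y ω, Z ω)) =
      ∑ s, ∑ t, ∑ v, -(p s t v * Real.logb 2 (p s t v)) := by
    rw [ent, tsum_fintype, Fintype.sum_prod_type]
    refine Finset.sum_congr rfl fun s _ => ?_
    rw [Fintype.sum_prod_type]
    refine Finset.sum_congr rfl fun t _ => Finset.sum_congr rfl fun v _ => ?_
    have hpre : (fun ω => (X ω, Y ω, Z ω)) ⁻¹' {(s, t, v)} =
        X ⁻¹' {s} ∩ Y ⁻¹' {t} ∩ Z ⁻¹' {v} := by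
      ext ω; simp [Prod.ext_iff]; tauto
    rw [hpre]
  -- cmi as a single triple sum
  have hcmi : cmi μ X Y Z = ∑ s, ∑ t, ∑ v,
      (-(p s t v * Real.logb 2 (qxz s v)) + -(p s t v * Real.logb 2 (qyz t v))
        - -(p s t v * Real.logb 2 (p s t v)) - -(p s t v * Real.logb 2 (qz v))) := by
    rw [cmi, hHxz, hHyz, hHxyz, hHz]
    simp only [← Finset.sum_add_distrib, ← Finset.sum_sub_distrib]
  rw [hcmi]
  -- the pointwise bound
  set L : ℝ := Real.log 2 with hL
  have hLpos : 0 < L := Real.log_pos one_lt_two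
  have key : ∀ s t v,
      (p s t v - qxz s v * qyz t v / qz v) / L ≤
      (-(p s t v * Real.logb 2 (qxz s v)) + -(p s t v * Real.logb 2 (qyz t v))
        - -(p s t v * Real.logb 2 (p s t v)) - -(p s t v * Real.logb 2 (qz v))) := by
    intro s t v
    rcases eq_or_lt_of_le (hpnn s t v) with hp0 | hp0
    · rw [← hp0]
      simp only [zero_mul, neg_zero, zero_sub, zero_add, sub_zero, zero_div]
      have : 0 ≤ qxz s v * qyz t v / qz v / L :=
        div_nonneg (div_nonneg (mul_nonneg (hqxznn s v) (hqyznn t v)) (hqznn v)) hLpos.le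
      rw [neg_div]
      linarith [this]
    · have hqxzpos : 0 < qxz s v :=
        lt_of_lt_of_le hp0 (Finset.single_le_sum (fun t _ => hpnn s t v) (Finset.mem_univ t))
      have hqyzpos : 0 < qyz t v :=
        lt_of_lt_of_le hp0 (Finset.single_le_sum (fun s _ => hpnn s t v) (Finset.mem_univ s))
      have hqzpos : 0 < qz v :=
        lt_of_lt_of_le hqxzpos (Finset.single_le_sum (fun s _ => hqxznn s v) (Finset.mem_univ s))
      simp only [Real.logb]
      exact log_bound hqxzpos hqyzpos hp0 hqzpos hLpos
  -- sum up
  have hsum := Finset.sum_le_sum (fun s (_ : s ∈ Finset.univ) =>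
    Finset.sum_le_sum (fun t (_ : t ∈ Finset.univ) =>
      Finset.sum_le_sum (fun v (_ : v ∈ Finset.univ) => key s t v)))
  refine le_trans ?_ hsum
  -- show 0 ≤ ∑∑∑ (p - f)/L
  have htotp : ∑ s, ∑ t, ∑ v, p s t v = 1 := by
    rw [sum_comm3]; exact htot
  have hf : ∑ s, ∑ t, ∑ v, qxz s v * qyz t v / qz v ≤ 1 := by
    rw [sum_comm3]
    have step : ∀ v, ∑ s, ∑ t, qxz s v * qyz t v / qz v ≤ qz v := by
      intro v
      have hyzsum : ∑ t, qyz t v = qz v := Finset.sum_comm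
      have e1 : ∑ s, ∑ t, qxz s v * qyz t v / qz v
          = (∑ s, qxz s v) * (∑ t, qyz t v) / qz v := by
        rw [Finset.sum_mul_sum]
        simp only [Finset.sum_div]
      rw [e1, hyzsum]
      rcases eq_or_ne (qz v) 0 with h | h
      · simp [h]
      · rw [show (∑ s, qxz s v) = qz v from rfl, mul_div_assoc, div_self h, mul_one]
    calc ∑ v, ∑ s, ∑ t, qxz s v * qyz t v / qz v ≤ ∑ v, qz v :=
          Finset.sum_le_sum fun v _ => step v
      _ = 1 := htot
  have : ∑ s, ∑ t, ∑ v, (p s t v - qxz s v * qyz t v / qz v) / L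
      = ((∑ s, ∑ t, ∑ v, p s t v) - ∑ s, ∑ t, ∑ v, qxz s v * qyz t v / qz v) / L := by
    simp only [← Finset.sum_sub_distrib, ← Finset.sum_div]
  rw [this, htotp]
  apply div_nonneg _ hLpos.le
  linarith

lemma mi_comm {Ω S T : Type*} [MeasurableSpace Ω] (μ : Measure Ω) [Fintype S] [Fintype T]
    (X : Ω → S) (Y : Ω → T) : mi μ X Y = mi μ Y X := by
  have h : ent μ (fun ω => (Y ω, X ω)) = ent μ (fun ω => (X ω, Y ω)) :=
    ent_comp_inj μ Prod.swap Prod.swap_injective (fun ω => rfl)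
  simp only [mi]
  linarith

lemma mi_nonneg {Ω S T : Type*} [MeasurableSpace Ω] (μ : Measure Ω) [IsProbabilityMeasure μ]
    [Fintype S] [Fintype T] (X : Ω → S) (Y : Ω → T)
    (hX : DMeasurable X) (hY : DMeasurable Y) : 0 ≤ mi μ X Y := by
  have hZ : DMeasurable (fun _ : Ω => ()) := by
    intro s
    have : (fun _ : Ω => ()) ⁻¹' {s} = Set.univ := by ext ω; simp
    rw [this]; exact MeasurableSet.univ
  have h := cmi_nonneg μ X Y (fun _ => ()) hX hY hZ
  have h1 : ent μ (fun ω => (X ω, ())) = ent μ X :=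
    ent_comp_inj μ (fun s => (s, ())) (fun a b hab => congrArg Prod.fst hab) (fun ω => rfl)
  have h2 : ent μ (fun ω => (Y ω, ())) = ent μ Y :=
    ent_comp_inj μ (fun s => (s, ())) (fun a b hab => congrArg Prod.fst hab) (fun ω => rfl)
  have h3 : ent μ (fun ω => (X ω, Y ω, ())) = ent μ (fun ω => (X ω, Y ω)) :=
    ent_comp_inj μ (fun st : S × T => (st.1, st.2, ()))
      (fun a b hab => by
        simp only [Prod.ext_iff] at hab ⊢
        tauto) (fun ω => rfl)
  have h4 : ent μ (fun _ : Ω => ()) = 0 := by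
    have hpre : ∀ s : Unit, (fun _ : Ω => ()) ⁻¹' {s} = Set.univ := by
      intro s; ext ω; simp
    rw [ent, tsum_fintype]
    simp [hpre, measure_univ]
  simp only [cmi] at h
  rw [h1, h2, h3, h4] at h
  simp only [mi]
  linarith

lemma mi_comp_le {Ω S T S' : Type*} [MeasurableSpace Ω] (μ : Measure Ω)
    [IsProbabilityMeasure μ] [Fintype S] [Fintype T] [Fintype S']
    (X : Ω → S) (B : Ω → T) (f : S → S')
    (hX : DMeasurable X) (hB : DMeasurable B) :
    mi μ (fun ω => f (X ω)) B ≤ mi μ X B := by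
  have hX' : DMeasurable (fun ω => f (X ω)) := dm_comp hX f
  have h := cmi_nonneg μ X B (fun ω => f (X ω)) hX hB hX'
  have h1 : ent μ (fun ω => (X ω, f (X ω))) = ent μ X :=
    ent_comp_inj μ (fun s => (s, f s)) (fun a b hab => congrArg Prod.fst hab) (fun ω => rfl)
  have h2 : ent μ (fun ω => (X ω, B ω, f (X ω))) = ent μ (fun ω => (X ω, B ω)) :=
    ent_comp_inj μ (fun st : S × T => (st.1, st.2, f st.1))
      (fun a b hab => by
        simp only [Prod.ext_iff] at hab ⊢
        tauto) (fun ω => rfl)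
  have h3 : ent μ (fun ω => (B ω, f (X ω))) = ent μ (fun ω => (f (X ω), B ω)) :=
    ent_comp_inj μ Prod.swap Prod.swap_injective (fun ω => rfl)
  simp only [cmi] at h
  rw [h1, h2, h3] at h
  simp only [mi]
  linarith

lemma mi_comp_zero {Ω S T S' T' : Type*} [MeasurableSpace Ω] (μ : Measure Ω)
    [IsProbabilityMeasure μ] [Fintype S] [Fintype T] [Fintype S'] [Fintype T']
    (A : Ω → S) (B : Ω → T) (f : S → S') (g : T → T') (A' : Ω → S') (B' : Ω → T')
    (hfA : ∀ ω, A' ω = f (A ω)) (hgB : ∀ ω, B' ω = g (B ω))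
    (hA : DMeasurable A) (hB : DMeasurable B) (h : mi μ A B = 0) :
    mi μ A' B' = 0 := by
  obtain rfl : A' = fun ω => f (A ω) := funext hfA
  obtain rfl : B' = fun ω => g (B ω) := funext hgB
  have hA' : DMeasurable (fun ω => f (A ω)) := dm_comp hA f
  have hB' : DMeasurable (fun ω => g (B ω)) := dm_comp hB g
  have h1 : mi μ (fun ω => f (A ω)) (fun ω => g (B ω)) ≤ mi μ A (fun ω => g (B ω)) :=
    mi_comp_le μ A (fun ω => g (B ω)) f hA hB'
  have h2 : mi μ A (fun ω => g (B ω)) ≤ mi μ A B := by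
    rw [mi_comm μ A (fun ω => g (B ω)), mi_comm μ A B]
    exact mi_comp_le μ B A g hB hA
  have h3 := mi_nonneg μ (fun ω => f (A ω)) (fun ω => g (B ω)) hA' hB'
  linarith

set_option maxHeartbeats 1000000 in
/-- Tensorization of Wyner's common information, subadditivity direction. -/
theorem wyner_tensorization_subadditive {Ω 𝒳₁ 𝒳₂ 𝒴₁ 𝒴₂ 𝒰₁ 𝒰₂ : Type} [MeasurableSpace Ω]
    (μ : Measure Ω) [IsProbabilityMeasure μ]
    [Fintype 𝒳₁] [Fintype 𝒳₂] [Fintype 𝒴₁] [Fintype 𝒴₂] [Fintype 𝒰₁] [Fintype 𝒰₂]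
    (X₁ : Ω → 𝒳₁) (X₂ : Ω → 𝒳₂) (Y₁ : Ω → 𝒴₁) (Y₂ : Ω → 𝒴₂) (U₁ : Ω → 𝒰₁) (U₂ : Ω → 𝒰₂)
    (hX₁ : DMeasurable X₁) (hX₂ : DMeasurable X₂) (hY₁ : DMeasurable Y₁)
    (hY₂ : DMeasurable Y₂) (hU₁ : DMeasurable U₁) (hU₂ : DMeasurable U₂)
    (hind : mi μ (fun ω => (X₁ ω, Y₁ ω, U₁ ω)) (fun ω => (X₂ ω, Y₂ ω, U₂ ω)) = 0)
    (hci₁ : cmi μ X₁ Y₁ U₁ = 0) (hci₂ : cmi μ X₂ Y₂ U₂ = 0) :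
    ∃ (𝒱 : Type) (_ : Fintype 𝒱) (V : Ω → 𝒱), DMeasurable V ∧
      cmi μ (fun ω => (X₁ ω, X₂ ω)) (fun ω => (Y₁ ω, Y₂ ω)) V = 0 ∧
      mi μ V (fun ω => (X₁ ω, X₂ ω, Y₁ ω, Y₂ ω))
        ≤ mi μ U₁ (fun ω => (X₁ ω, Y₁ ω)) + mi μ U₂ (fun ω => (X₂ ω, Y₂ ω)) := by
  classical
  have hA : DMeasurable (fun ω => (X₁ ω, Y₁ ω, U₁ ω)) := dm_pair hX₁ (dm_pair hY₁ hU₁)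
  have hB : DMeasurable (fun ω => (X₂ ω, Y₂ ω, U₂ ω)) := dm_pair hX₂ (dm_pair hY₂ hU₂)
  have hXU : mi μ (fun ω => (X₁ ω, U₁ ω)) (fun ω => (X₂ ω, U₂ ω)) = 0 :=
    mi_comp_zero μ _ _ (fun a : 𝒳₁ × 𝒴₁ × 𝒰₁ => (a.1, a.2.2))
      (fun a : 𝒳₂ × 𝒴₂ × 𝒰₂ => (a.1, a.2.2)) _ _ (fun ω => rfl) (fun ω => rfl) hA hB hind
  have hYU : mi μ (fun ω => (Y₁ ω, U₁ ω)) (fun ω => (Y₂ ω, U₂ ω)) = 0 :=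
    mi_comp_zero μ _ _ (fun a : 𝒳₁ × 𝒴₁ × 𝒰₁ => (a.2.1, a.2.2))
      (fun a : 𝒳₂ × 𝒴₂ × 𝒰₂ => (a.2.1, a.2.2)) _ _ (fun ω => rfl) (fun ω => rfl) hA hB hind
  have hUU : mi μ U₁ U₂ = 0 :=
    mi_comp_zero μ _ _ (fun a : 𝒳₁ × 𝒴₁ × 𝒰₁ => a.2.2)
      (fun a : 𝒳₂ × 𝒴₂ × 𝒰₂ => a.2.2) _ _ (fun ω => rfl) (fun ω => rfl) hA hB hind
  have hXY : mi μ (fun ω => (X₁ ω, Y₁ ω)) (fun ω => (X₂ ω, Y₂ ω)) = 0 :=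
    mi_comp_zero μ _ _ (fun a : 𝒳₁ × 𝒴₁ × 𝒰₁ => (a.1, a.2.1))
      (fun a : 𝒳₂ × 𝒴₂ × 𝒰₂ => (a.1, a.2.1)) _ _ (fun ω => rfl) (fun ω => rfl) hA hB hind
  have r1 : ent μ (fun ω => ((X₁ ω, X₂ ω), (U₁ ω, U₂ ω)))
      = ent μ (fun ω => ((X₁ ω, U₁ ω), (X₂ ω, U₂ ω))) :=
    ent_comp_inj μ (fun q : (𝒳₁ × 𝒰₁) × (𝒳₂ × 𝒰₂) => ((q.1.1, q.2.1), (q.1.2, q.2.2)))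
      (by intro a b hab; simp only [Prod.ext_iff] at hab ⊢; tauto) (fun ω => rfl)
  have r2 : ent μ (fun ω => ((Y₁ ω, Y₂ ω), (U₁ ω, U₂ ω)))
      = ent μ (fun ω => ((Y₁ ω, U₁ ω), (Y₂ ω, U₂ ω))) :=
    ent_comp_inj μ (fun q : (𝒴₁ × 𝒰₁) × (𝒴₂ × 𝒰₂) => ((q.1.1, q.2.1), (q.1.2, q.2.2)))
      (by intro a b hab; simp only [Prod.ext_iff] at hab ⊢; tauto) (fun ω => rfl)
  have r3 : ent μ (fun ω => ((X₁ ω, X₂ ω), (Y₁ ω, Y₂ ω), (U₁ ω, U₂ ω)))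
      = ent μ (fun ω => ((X₁ ω, Y₁ ω, U₁ ω), (X₂ ω, Y₂ ω, U₂ ω))) :=
    ent_comp_inj μ (fun q : (𝒳₁ × 𝒴₁ × 𝒰₁) × (𝒳₂ × 𝒴₂ × 𝒰₂) =>
        ((q.1.1, q.2.1), (q.1.2.1, q.2.2.1), (q.1.2.2, q.2.2.2)))
      (by intro a b hab; simp only [Prod.ext_iff] at hab ⊢; tauto) (fun ω => rfl)
  have r5 : ent μ (fun ω => (X₁ ω, X₂ ω, Y₁ ω, Y₂ ω))
      = ent μ (fun ω => ((X₁ ω, Y₁ ω), (X₂ ω, Y₂ ω))) :=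
    ent_comp_inj μ (fun q : (𝒳₁ × 𝒴₁) × (𝒳₂ × 𝒴₂) => (q.1.1, q.2.1, q.1.2, q.2.2))
      (by intro a b hab; simp only [Prod.ext_iff] at hab ⊢; tauto) (fun ω => rfl)
  have r6 : ent μ (fun ω => ((U₁ ω, U₂ ω), (X₁ ω, X₂ ω, Y₁ ω, Y₂ ω)))
      = ent μ (fun ω => ((X₁ ω, Y₁ ω, U₁ ω), (X₂ ω, Y₂ ω, U₂ ω))) :=
    ent_comp_inj μ (fun q : (𝒳₁ × 𝒴₁ × 𝒰₁) × (𝒳₂ × 𝒴₂ × 𝒰₂) =>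
        ((q.1.2.2, q.2.2.2), (q.1.1, q.2.1, q.1.2.1, q.2.2.1)))
      (by intro a b hab; simp only [Prod.ext_iff] at hab ⊢; tauto) (fun ω => rfl)
  have r7 : ent μ (fun ω => (U₁ ω, (X₁ ω, Y₁ ω)))
      = ent μ (fun ω => (X₁ ω, Y₁ ω, U₁ ω)) :=
    ent_comp_inj μ (fun q : 𝒳₁ × 𝒴₁ × 𝒰₁ => (q.2.2, (q.1, q.2.1)))
      (by intro a b hab; simp only [Prod.ext_iff] at hab ⊢; tauto) (fun ω => rfl)
  have r8 : ent μ (fun ω => (U₂ ω, (X₂ ω, Y₂ ω)))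
      = ent μ (fun ω => (X₂ ω, Y₂ ω, U₂ ω)) :=
    ent_comp_inj μ (fun q : 𝒳₂ × 𝒴₂ × 𝒰₂ => (q.2.2, (q.1, q.2.1)))
      (by intro a b hab; simp only [Prod.ext_iff] at hab ⊢; tauto) (fun ω => rfl)
  simp only [mi] at hXU hYU hUU hXY hind
  simp only [cmi] at hci₁ hci₂
  refine ⟨𝒰₁ × 𝒰₂, inferInstance, fun ω => (U₁ ω, U₂ ω), dm_pair hU₁ hU₂, ?_, ?_⟩
  · simp only [cmi]
    rw [r1, r2, r3]
    linarith
  · simp only [mi]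
    rw [r5, r6, r7, r8]
    linarith
end

section
/- Superadditivity of Gács–Körner common information: Let X₁, X₂, Y₁, Y₂, U₁, U₂ be random variables on a common probability space taking values in finite sets, and suppose I(X₁,Y₁ ; X₂,Y₂) = 0, H(U₁|X₁) = H(U₁|Y₁) = 0, and H(U₂|X₂) = H(U₂|Y₂) = 0. Then there exists a random variable U on the same probability space, taking values in a finite set, such that H(U | X₁,X₂) = 0, H(U | Y₁,Y₂) = 0, and H(U) ≥ H(U₁) + H(U₂). -/
open MeasureTheory

/- ### Auxiliary lemmas -/

section GKAux

set_option linter.unusedSectionVars false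
set_option linter.unusedVariables false

variable {Ω : Type*} [MeasurableSpace Ω] (μ : Measure Ω)

lemma gk_pair_preimage {S T : Type*} (X : Ω → S) (Y : Ω → T) (s : S) (t : T) :
    (fun ω => (X ω, Y ω)) ⁻¹' {(s, t)} = X ⁻¹' {s} ∩ Y ⁻¹' {t} := by
  ext ω; simp [Prod.ext_iff]

lemma gk_dmeasurable_pair {S T : Type*} {X : Ω → S} {Y : Ω → T}
    (hX : DMeasurable X) (hY : DMeasurable Y) : DMeasurable (fun ω => (X ω, Y ω)) := by
  rintro ⟨s, t⟩
  rw [gk_pair_preimage]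
  exact (hX s).inter (hY t)

lemma gk_sum_inter_fiber {T : Type*} [Fintype T] {Y : Ω → T} (hY : DMeasurable Y)
    (A : Set Ω) : ∑ t, μ (Y ⁻¹' {t} ∩ A) = μ A := by
  calc ∑ t, μ (Y ⁻¹' {t} ∩ A) = ∑ t, μ.restrict A (Y ⁻¹' {t}) := by
        refine Finset.sum_congr rfl fun t _ => ?_
        rw [Measure.restrict_apply (hY t)]
    _ = μ.restrict A (Y ⁻¹' ↑(Finset.univ : Finset T)) :=
        MeasureTheory.sum_measure_preimage_singleton _ (fun t _ => hY t)
    _ = μ A := by simp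

variable [IsProbabilityMeasure μ]

lemma gk_sum_inter_fiber' {T : Type*} [Fintype T] {Y : Ω → T} (hY : DMeasurable Y)
    (A : Set Ω) : ∑ t, (μ (Y ⁻¹' {t} ∩ A)).toReal = (μ A).toReal := by
  rw [← ENNReal.toReal_sum (fun t _ => measure_ne_top μ _), gk_sum_inter_fiber μ hY A]

lemma gk_sum_fiber_one {T : Type*} [Fintype T] {Y : Ω → T} (hY : DMeasurable Y) :
    ∑ t, (μ (Y ⁻¹' {t})).toReal = 1 := by
  have := gk_sum_inter_fiber' μ hY Set.univ
  simpa using this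

lemma gk_ent_eq {S : Type*} [Fintype S] (X : Ω → S) :
    ent μ X = ∑ s, -((μ (X ⁻¹' {s})).toReal * Real.logb 2 (μ (X ⁻¹' {s})).toReal) :=
  tsum_fintype _

lemma gk_ent_pair_eq {S T : Type*} [Fintype S] [Fintype T] (X : Ω → S) (Y : Ω → T) :
    ent μ (fun ω => (X ω, Y ω)) =
      ∑ s, ∑ t, -((μ (X ⁻¹' {s} ∩ Y ⁻¹' {t})).toReal *
        Real.logb 2 (μ (X ⁻¹' {s} ∩ Y ⁻¹' {t})).toReal) := by
  rw [gk_ent_eq, Fintype.sum_prod_type]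
  exact Finset.sum_congr rfl fun s _ => Finset.sum_congr rfl fun t _ => by
    rw [gk_pair_preimage]

lemma gk_term_nonneg {q p : ℝ} (h0 : 0 ≤ q) (hqp : q ≤ p) :
    0 ≤ q * (Real.logb 2 p - Real.logb 2 q) := by
  rcases h0.eq_or_lt with h | h
  · simp [← h]
  · have hp : 0 < p := lt_of_lt_of_le h hqp
    have := Real.logb_le_logb_of_le (b := 2) one_lt_two h hqp
    have : 0 ≤ Real.logb 2 p - Real.logb 2 q := by linarith
    positivity

lemma gk_term_eq_zero {q p : ℝ} (h0 : 0 ≤ q) (hqp : q ≤ p)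
    (h : q * (Real.logb 2 p - Real.logb 2 q) = 0) : q = 0 ∨ q = p := by
  rcases h0.eq_or_lt with h1 | h1
  · exact Or.inl h1.symm
  · refine Or.inr ?_
    rcases hqp.eq_or_lt with h2 | h2
    · exact h2
    · exfalso
      have hlt : Real.logb 2 q < Real.logb 2 p := Real.logb_lt_logb one_lt_two h1 h2
      nlinarith

/-- `H(W | X) = 0` iff `W` is determined by `X` up to null sets. -/
lemma gk_condEnt_zero_iff {S U : Type*} [Fintype S] [Fintype U]
    {X : Ω → S} {W : Ω → U} (hX : DMeasurable X) (hW : DMeasurable W) :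
    condEnt μ W X = 0 ↔
      ∀ u s, μ (W ⁻¹' {u} ∩ X ⁻¹' {s}) = 0 ∨ μ (W ⁻¹' {u} ∩ X ⁻¹' {s}) = μ (X ⁻¹' {s}) := by
  set q : U → S → ℝ := fun u s => (μ (W ⁻¹' {u} ∩ X ⁻¹' {s})).toReal with hq
  set p : S → ℝ := fun s => (μ (X ⁻¹' {s})).toReal with hp
  have hqnn : ∀ u s, 0 ≤ q u s := fun u s => ENNReal.toReal_nonneg
  have hqle : ∀ u s, q u s ≤ p s := fun u s =>
    ENNReal.toReal_mono (measure_ne_top μ _) (measure_mono Set.inter_subset_right)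
  have hmargin : ∀ s, ∑ u, q u s = p s := fun s => gk_sum_inter_fiber' μ hW _
  have hce : condEnt μ W X = ∑ s, ∑ u, q u s * (Real.logb 2 (p s) - Real.logb 2 (q u s)) := by
    unfold condEnt
    rw [gk_ent_pair_eq μ W X, gk_ent_eq μ X, Finset.sum_comm, ← Finset.sum_sub_distrib]
    refine Finset.sum_congr rfl fun s _ => ?_
    calc (∑ u, -(q u s * Real.logb 2 (q u s))) - -(p s * Real.logb 2 (p s))
        = (∑ u, -(q u s * Real.logb 2 (q u s))) + ∑ u, q u s * Real.logb 2 (p s) := by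
          rw [sub_neg_eq_add, ← Finset.sum_mul, hmargin s]
      _ = ∑ u, q u s * (Real.logb 2 (p s) - Real.logb 2 (q u s)) := by
          rw [← Finset.sum_add_distrib]
          exact Finset.sum_congr rfl fun u _ => by ring
  constructor
  · intro h u s
    rw [hce] at h
    have hz : ∀ s ∈ Finset.univ (α := S), ∀ u ∈ Finset.univ (α := U),
        q u s * (Real.logb 2 (p s) - Real.logb 2 (q u s)) = 0 := by
      have h1 := (Finset.sum_eq_zero_iff_of_nonneg (fun s _ =>
        Finset.sum_nonneg fun u _ => gk_term_nonneg (hqnn u s) (hqle u s))).mp h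
      intro s hs
      exact (Finset.sum_eq_zero_iff_of_nonneg (fun u _ =>
        gk_term_nonneg (hqnn u s) (hqle u s))).mp (h1 s hs)
    rcases gk_term_eq_zero (hqnn u s) (hqle u s)
      (hz s (Finset.mem_univ s) u (Finset.mem_univ u)) with h0 | h0
    · left
      have := (ENNReal.toReal_eq_zero_iff _).mp h0
      exact this.resolve_right (measure_ne_top μ _)
    · right
      exact (ENNReal.toReal_eq_toReal_iff' (measure_ne_top μ _) (measure_ne_top μ _)).mp h0
  · intro h
    rw [hce]
    refine Finset.sum_eq_zero fun s _ => Finset.sum_eq_zero fun u _ => ?_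
    rcases h u s with h0 | h0
    · have : q u s = 0 := by simp [hq, h0]
      rw [this]; ring
    · have : q u s = p s := by simp [hq, hp, h0]
      rw [this]; ring

lemma gk_key2 {q a b : ℝ} (hq : 0 ≤ q) (hqa : q ≤ a) (hqb : q ≤ b) :
    0 ≤ q * (Real.logb 2 q - Real.logb 2 a - Real.logb 2 b) + (a * b - q) / Real.log 2 ∧
    (q * (Real.logb 2 q - Real.logb 2 a - Real.logb 2 b) + (a * b - q) / Real.log 2 = 0 →
      q = a * b) := by
  have hlog2 : 0 < Real.log 2 := Real.log_pos one_lt_two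
  rcases hq.eq_or_lt with h0 | h0
  · subst h0
    have ha : 0 ≤ a := hqa
    have hb : 0 ≤ b := hqb
    constructor
    · have : 0 ≤ a * b := mul_nonneg ha hb
      simp only [zero_mul, zero_add, sub_zero]
      positivity
    · intro h
      simp only [zero_mul, zero_add, sub_zero] at h
      have : a * b = 0 := by
        field_simp at h
        linarith
      linarith
  · have ha : 0 < a := h0.trans_le hqa
    have hb : 0 < b := h0.trans_le hqb
    have hab : 0 < a * b := mul_pos ha hb
    have e1 : Real.logb 2 q - Real.logb 2 a - Real.logb 2 b
        = -(Real.log (a * b / q)) / Real.log 2 := by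
      rw [Real.logb, Real.logb, Real.logb,
        Real.log_div (ne_of_gt hab) (ne_of_gt h0), Real.log_mul ha.ne' hb.ne']
      ring
    set L := Real.log (a * b / q) with hL
    have e2 : q * (-(L) / Real.log 2) + (a * b - q) / Real.log 2
        = ((a * b - q) - q * L) / Real.log 2 := by ring
    have hle : L ≤ a * b / q - 1 := Real.log_le_sub_one_of_pos (div_pos hab h0)
    have hqL : q * L ≤ a * b - q := by
      have h3 := mul_le_mul_of_nonneg_left hle (le_of_lt h0)
      have h4 : q * (a * b / q - 1) = a * b - q := by field_simp
      linarith
    rw [e1, e2]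
    constructor
    · exact div_nonneg (by linarith) hlog2.le
    · intro h
      have h5 : (a * b - q) - q * L = 0 := by
        field_simp at h
        linarith
      by_contra hne
      have hne1 : a * b / q ≠ 1 := by
        intro hc
        apply hne
        field_simp at hc
        linarith
      have hstrict : L < a * b / q - 1 := Real.log_lt_sub_one_of_pos (div_pos hab h0) hne1
      have := mul_lt_mul_of_pos_left hstrict h0
      have h4 : q * (a * b / q - 1) = a * b - q := by field_simp
      nlinarith

/-- Vanishing mutual information implies independence. -/
lemma gk_mi_zero_indep {S T : Type*} [Fintype S] [Fintype T] {X : Ω → S} {Y : Ω → T}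
    (hX : DMeasurable X) (hY : DMeasurable Y) (h : mi μ X Y = 0) :
    ∀ s t, (μ (X ⁻¹' {s} ∩ Y ⁻¹' {t})).toReal
      = (μ (X ⁻¹' {s})).toReal * (μ (Y ⁻¹' {t})).toReal := by
  set q : S → T → ℝ := fun s t => (μ (X ⁻¹' {s} ∩ Y ⁻¹' {t})).toReal with hqdef
  set a : S → ℝ := fun s => (μ (X ⁻¹' {s})).toReal with hadef
  set b : T → ℝ := fun t => (μ (Y ⁻¹' {t})).toReal with hbdef
  have hqnn : ∀ s t, 0 ≤ q s t := fun s t => ENNReal.toReal_nonneg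
  have hqa : ∀ s t, q s t ≤ a s := fun s t =>
    ENNReal.toReal_mono (measure_ne_top μ _) (measure_mono Set.inter_subset_left)
  have hqb : ∀ s t, q s t ≤ b t := fun s t =>
    ENNReal.toReal_mono (measure_ne_top μ _) (measure_mono Set.inter_subset_right)
  have hmarga : ∀ s, ∑ t, q s t = a s := by
    intro s
    show ∑ t, (μ (X ⁻¹' {s} ∩ Y ⁻¹' {t})).toReal = (μ (X ⁻¹' {s})).toReal
    rw [← gk_sum_inter_fiber' μ hY (X ⁻¹' {s})]
    exact Finset.sum_congr rfl fun t _ => by rw [Set.inter_comm]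
  have hmargb : ∀ t, ∑ s, q s t = b t := fun t => gk_sum_inter_fiber' μ hX _
  have hmi : mi μ X Y = ∑ s, ∑ t,
      q s t * (Real.logb 2 (q s t) - Real.logb 2 (a s) - Real.logb 2 (b t)) := by
    unfold mi
    rw [gk_ent_eq μ X, gk_ent_eq μ Y, gk_ent_pair_eq μ X Y]
    have e1 : ∑ s, -(a s * Real.logb 2 (a s))
        = ∑ s, ∑ t, -(q s t * Real.logb 2 (a s)) := by
      refine Finset.sum_congr rfl fun s _ => ?_
      rw [← hmarga s, Finset.sum_mul, ← Finset.sum_neg_distrib]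
    have e2 : ∑ t, -(b t * Real.logb 2 (b t))
        = ∑ s, ∑ t, -(q s t * Real.logb 2 (b t)) := by
      rw [Finset.sum_comm]
      refine Finset.sum_congr rfl fun t _ => ?_
      rw [← hmargb t, Finset.sum_mul, ← Finset.sum_neg_distrib]
    rw [e1, e2, ← Finset.sum_add_distrib, ← Finset.sum_sub_distrib]
    refine Finset.sum_congr rfl fun s _ => ?_
    rw [← Finset.sum_add_distrib, ← Finset.sum_sub_distrib]
    exact Finset.sum_congr rfl fun t _ => by ring
  have hcomp : ∑ s, ∑ t, (a s * b t - q s t) / Real.log 2 = 0 := by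
    have h1 : ∑ s, ∑ t, a s * b t = 1 := by
      have : ∀ s, ∑ t, a s * b t = a s := by
        intro s
        rw [← Finset.mul_sum, gk_sum_fiber_one μ hY, mul_one]
      rw [Finset.sum_congr rfl fun s _ => this s]
      exact gk_sum_fiber_one μ hX
    have h2 : ∑ s, ∑ t, q s t = 1 := by
      rw [Finset.sum_congr rfl fun s _ => hmarga s]
      exact gk_sum_fiber_one μ hX
    have : ∑ s, ∑ t, (a s * b t - q s t) / Real.log 2
        = ((∑ s, ∑ t, a s * b t) - ∑ s, ∑ t, q s t) / Real.log 2 := by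
      rw [← Finset.sum_sub_distrib, Finset.sum_div]
      refine Finset.sum_congr rfl fun s _ => ?_
      rw [← Finset.sum_sub_distrib, Finset.sum_div]
    rw [this, h1, h2]
    simp
  have htot : ∑ s, ∑ t,
      (q s t * (Real.logb 2 (q s t) - Real.logb 2 (a s) - Real.logb 2 (b t))
        + (a s * b t - q s t) / Real.log 2) = 0 := by
    have : ∀ s, ∑ t, (q s t * (Real.logb 2 (q s t) - Real.logb 2 (a s) - Real.logb 2 (b t))
        + (a s * b t - q s t) / Real.log 2)
        = (∑ t, q s t * (Real.logb 2 (q s t) - Real.logb 2 (a s) - Real.logb 2 (b t)))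
          + ∑ t, (a s * b t - q s t) / Real.log 2 := fun s => Finset.sum_add_distrib
    rw [Finset.sum_congr rfl fun s _ => this s, Finset.sum_add_distrib, ← hmi, h, hcomp,
      zero_add]
  intro s t
  have hz := (Finset.sum_eq_zero_iff_of_nonneg (fun s _ => Finset.sum_nonneg fun t _ =>
      (gk_key2 (hqnn s t) (hqa s t) (hqb s t)).1)).mp htot s (Finset.mem_univ s)
  have hz2 := (Finset.sum_eq_zero_iff_of_nonneg (fun t _ =>
      (gk_key2 (hqnn s t) (hqa s t) (hqb s t)).1)).mp hz t (Finset.mem_univ t)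
  exact (gk_key2 (hqnn s t) (hqa s t) (hqb s t)).2 hz2

/-- Entropy of a pair of independent variables is the sum of the entropies. -/
lemma gk_ent_pair_of_indep {S T : Type*} [Fintype S] [Fintype T] {X : Ω → S} {Y : Ω → T}
    (hX : DMeasurable X) (hY : DMeasurable Y)
    (h : ∀ s t, (μ (X ⁻¹' {s} ∩ Y ⁻¹' {t})).toReal
      = (μ (X ⁻¹' {s})).toReal * (μ (Y ⁻¹' {t})).toReal) :
    ent μ (fun ω => (X ω, Y ω)) = ent μ X + ent μ Y := by
  set a : S → ℝ := fun s => (μ (X ⁻¹' {s})).toReal with hadef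
  set b : T → ℝ := fun t => (μ (Y ⁻¹' {t})).toReal with hbdef
  have hann : ∀ s, 0 ≤ a s := fun s => ENNReal.toReal_nonneg
  have hbnn : ∀ t, 0 ≤ b t := fun t => ENNReal.toReal_nonneg
  have h' : ∀ s t, (μ (X ⁻¹' {s} ∩ Y ⁻¹' {t})).toReal = a s * b t := h
  rw [gk_ent_pair_eq μ X Y, gk_ent_eq μ X, gk_ent_eq μ Y]
  have key : ∀ s t, -((μ (X ⁻¹' {s} ∩ Y ⁻¹' {t})).toReal *
      Real.logb 2 (μ (X ⁻¹' {s} ∩ Y ⁻¹' {t})).toReal)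
      = -(a s * b t * Real.logb 2 (a s)) + -(a s * b t * Real.logb 2 (b t)) := by
    intro s t
    rw [h' s t]
    rcases eq_or_ne (a s) 0 with h0 | h0
    · rw [h0]; ring
    rcases eq_or_ne (b t) 0 with h1 | h1
    · rw [h1]; ring
    · rw [Real.logb_mul h0 h1]; ring
  rw [Finset.sum_congr rfl fun s _ => Finset.sum_congr rfl fun t _ => key s t]
  have e1 : ∑ s, ∑ t, -(a s * b t * Real.logb 2 (a s)) = ∑ s, -(a s * Real.logb 2 (a s)) := by
    refine Finset.sum_congr rfl fun s _ => ?_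
    have : ∑ t, -(a s * b t * Real.logb 2 (a s))
        = -((∑ t, b t) * (a s * Real.logb 2 (a s))) := by
      rw [Finset.sum_mul, ← Finset.sum_neg_distrib]
      exact Finset.sum_congr rfl fun t _ => by ring
    rw [this, gk_sum_fiber_one μ hY, one_mul]
  have e2 : ∑ s, ∑ t, -(a s * b t * Real.logb 2 (b t)) = ∑ t, -(b t * Real.logb 2 (b t)) := by
    rw [Finset.sum_comm]
    refine Finset.sum_congr rfl fun t _ => ?_
    have : ∑ s, -(a s * b t * Real.logb 2 (b t))
        = -((∑ s, a s) * (b t * Real.logb 2 (b t))) := by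
      rw [Finset.sum_mul, ← Finset.sum_neg_distrib]
      exact Finset.sum_congr rfl fun s _ => by ring
    rw [this, gk_sum_fiber_one μ hX, one_mul]
  rw [Finset.sum_congr rfl fun s _ => Finset.sum_add_distrib, Finset.sum_add_distrib, e1, e2]

lemma gk_inter_eq_of_diff_null {A B : Set Ω} (h : μ (A \ B) = 0) : μ (B ∩ A) = μ A := by
  rw [Set.inter_comm]
  refine le_antisymm (measure_mono Set.inter_subset_left) ?_
  calc μ A = μ ((A ∩ B) ∪ (A \ B)) := by rw [Set.inter_union_diff]
    _ ≤ μ (A ∩ B) + μ (A \ B) := measure_union_le _ _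
    _ = μ (A ∩ B) := by rw [h, add_zero]

lemma gk_diff_null_of_inter_full {A B : Set Ω} (hB : MeasurableSet B)
    (h : μ (B ∩ A) = μ A) : μ (A \ B) = 0 := by
  have h1 : μ (A ∩ B) + μ (A \ B) = μ A := measure_inter_add_diff A hB
  rw [Set.inter_comm] at h1
  rw [h] at h1
  have h2 : μ A + μ (A \ B) = μ A + 0 := by rw [add_zero]; exact h1
  exact (ENNReal.add_right_inj (measure_ne_top μ _)).mp h2

lemma gk_det_pair_full {A₁ A₂ B₁ B₂ : Set Ω} (hB₁ : MeasurableSet B₁)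
    (hB₂ : MeasurableSet B₂) (h₁ : μ (B₁ ∩ A₁) = μ A₁) (h₂ : μ (B₂ ∩ A₂) = μ A₂) :
    μ ((B₁ ∩ B₂) ∩ (A₁ ∩ A₂)) = μ (A₁ ∩ A₂) := by
  have d₁ := gk_diff_null_of_inter_full μ hB₁ h₁
  have d₂ := gk_diff_null_of_inter_full μ hB₂ h₂
  have hd : μ ((A₁ ∩ A₂) \ (B₁ ∩ B₂)) = 0 := by
    have hsub : (A₁ ∩ A₂) \ (B₁ ∩ B₂) ⊆ (A₁ \ B₁) ∪ (A₂ \ B₂) := by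
      intro ω hω
      by_cases hb : ω ∈ B₁
      · exact Or.inr ⟨hω.1.2, fun hb2 => hω.2 ⟨hb, hb2⟩⟩
      · exact Or.inl ⟨hω.1.1, hb⟩
    exact measure_mono_null hsub (measure_union_null d₁ d₂)
  exact gk_inter_eq_of_diff_null μ hd

lemma gk_det_pair {A₁ A₂ B₁ B₂ : Set Ω} (hB₁ : MeasurableSet B₁) (hB₂ : MeasurableSet B₂)
    (h₁ : μ (B₁ ∩ A₁) = 0 ∨ μ (B₁ ∩ A₁) = μ A₁)
    (h₂ : μ (B₂ ∩ A₂) = 0 ∨ μ (B₂ ∩ A₂) = μ A₂) :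
    μ ((B₁ ∩ B₂) ∩ (A₁ ∩ A₂)) = 0 ∨ μ ((B₁ ∩ B₂) ∩ (A₁ ∩ A₂)) = μ (A₁ ∩ A₂) := by
  rcases h₁ with h₁ | h₁
  · refine Or.inl (measure_mono_null ?_ h₁)
    intro ω hω
    exact ⟨hω.1.1, hω.2.1⟩
  rcases h₂ with h₂ | h₂
  · refine Or.inl (measure_mono_null ?_ h₂)
    intro ω hω
    exact ⟨hω.1.2, hω.2.2⟩
  · exact Or.inr (gk_det_pair_full μ hB₁ hB₂ h₁ h₂)

lemma gk_det_finer {A A' B : Set Ω} (hB : MeasurableSet B) (hsub : A' ⊆ A)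
    (h : μ (B ∩ A) = 0 ∨ μ (B ∩ A) = μ A) :
    μ (B ∩ A') = 0 ∨ μ (B ∩ A') = μ A' := by
  rcases h with h | h
  · exact Or.inl (measure_mono_null (Set.inter_subset_inter_right _ hsub) h)
  · right
    have hd := gk_diff_null_of_inter_full μ hB h
    have : μ (A' \ B) = 0 := measure_mono_null (Set.diff_subset_diff_left hsub) hd
    exact gk_inter_eq_of_diff_null μ this

end GKAux

/-- Superadditivity of Gács–Körner common information. -/
theorem gacs_korner_superadditive {Ω 𝒳₁ 𝒳₂ 𝒴₁ 𝒴₂ 𝒰₁ 𝒰₂ : Type} [MeasurableSpace Ω]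
    (μ : Measure Ω) [IsProbabilityMeasure μ]
    [Fintype 𝒳₁] [Fintype 𝒳₂] [Fintype 𝒴₁] [Fintype 𝒴₂] [Fintype 𝒰₁] [Fintype 𝒰₂]
    (X₁ : Ω → 𝒳₁) (X₂ : Ω → 𝒳₂) (Y₁ : Ω → 𝒴₁) (Y₂ : Ω → 𝒴₂) (U₁ : Ω → 𝒰₁) (U₂ : Ω → 𝒰₂)
    (hX₁ : DMeasurable X₁) (hX₂ : DMeasurable X₂) (hY₁ : DMeasurable Y₁)
    (hY₂ : DMeasurable Y₂) (hU₁ : DMeasurable U₁) (hU₂ : DMeasurable U₂)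
    (hind : mi μ (fun ω => (X₁ ω, Y₁ ω)) (fun ω => (X₂ ω, Y₂ ω)) = 0)
    (hU₁X : condEnt μ U₁ X₁ = 0) (hU₁Y : condEnt μ U₁ Y₁ = 0)
    (hU₂X : condEnt μ U₂ X₂ = 0) (hU₂Y : condEnt μ U₂ Y₂ = 0) :
    ∃ (𝒰 : Type) (_ : Fintype 𝒰) (U : Ω → 𝒰), DMeasurable U ∧
      condEnt μ U (fun ω => (X₁ ω, X₂ ω)) = 0 ∧
      condEnt μ U (fun ω => (Y₁ ω, Y₂ ω)) = 0 ∧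
      ent μ U ≥ ent μ U₁ + ent μ U₂ := by
  classical
  have hP₁ : DMeasurable (fun ω => (X₁ ω, Y₁ ω)) := gk_dmeasurable_pair hX₁ hY₁
  have hP₂ : DMeasurable (fun ω => (X₂ ω, Y₂ ω)) := gk_dmeasurable_pair hX₂ hY₂
  have hdetX₁ := (gk_condEnt_zero_iff μ hX₁ hU₁).mp hU₁X
  have hdetX₂ := (gk_condEnt_zero_iff μ hX₂ hU₂).mp hU₂X
  have hdetY₁ := (gk_condEnt_zero_iff μ hY₁ hU₁).mp hU₁Y
  have hdetY₂ := (gk_condEnt_zero_iff μ hY₂ hU₂).mp hU₂Y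
  have hindep := gk_mi_zero_indep μ hP₁ hP₂ hind
  -- determinism of U₁, U₂ with respect to the joint fibers of (Xᵢ, Yᵢ)
  have hdetP₁ : ∀ u (p : 𝒳₁ × 𝒴₁),
      μ (U₁ ⁻¹' {u} ∩ (fun ω => (X₁ ω, Y₁ ω)) ⁻¹' {p}) = 0 ∨
      μ (U₁ ⁻¹' {u} ∩ (fun ω => (X₁ ω, Y₁ ω)) ⁻¹' {p}) = μ ((fun ω => (X₁ ω, Y₁ ω)) ⁻¹' {p}) := by
    rintro u ⟨x, y⟩
    refine gk_det_finer μ (hU₁ u) ?_ (hdetX₁ u x)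
    rw [gk_pair_preimage]
    exact Set.inter_subset_left
  have hdetP₂ : ∀ u (p : 𝒳₂ × 𝒴₂),
      μ (U₂ ⁻¹' {u} ∩ (fun ω => (X₂ ω, Y₂ ω)) ⁻¹' {p}) = 0 ∨
      μ (U₂ ⁻¹' {u} ∩ (fun ω => (X₂ ω, Y₂ ω)) ⁻¹' {p}) = μ ((fun ω => (X₂ ω, Y₂ ω)) ⁻¹' {p}) := by
    rintro u ⟨x, y⟩
    refine gk_det_finer μ (hU₂ u) ?_ (hdetX₂ u x)
    rw [gk_pair_preimage]
    exact Set.inter_subset_left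
  -- independence of U₁ and U₂
  have hterm : ∀ (u₁ : 𝒰₁) (u₂ : 𝒰₂) (p₁ : 𝒳₁ × 𝒴₁) (p₂ : 𝒳₂ × 𝒴₂),
      (μ ((fun ω => (X₂ ω, Y₂ ω)) ⁻¹' {p₂} ∩ ((fun ω => (X₁ ω, Y₁ ω)) ⁻¹' {p₁} ∩
        (U₁ ⁻¹' {u₁} ∩ U₂ ⁻¹' {u₂})))).toReal
      = (μ ((fun ω => (X₁ ω, Y₁ ω)) ⁻¹' {p₁} ∩ U₁ ⁻¹' {u₁})).toReal *
        (μ ((fun ω => (X₂ ω, Y₂ ω)) ⁻¹' {p₂} ∩ U₂ ⁻¹' {u₂})).toReal := by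
    intro u₁ u₂ p₁ p₂
    have hset : (fun ω => (X₂ ω, Y₂ ω)) ⁻¹' {p₂} ∩ ((fun ω => (X₁ ω, Y₁ ω)) ⁻¹' {p₁} ∩
        (U₁ ⁻¹' {u₁} ∩ U₂ ⁻¹' {u₂}))
        = (U₁ ⁻¹' {u₁} ∩ U₂ ⁻¹' {u₂}) ∩
          ((fun ω => (X₁ ω, Y₁ ω)) ⁻¹' {p₁} ∩ (fun ω => (X₂ ω, Y₂ ω)) ⁻¹' {p₂}) := by
      ext ω
      simp only [Set.mem_inter_iff]
      tauto
    rw [hset]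
    rcases hdetP₁ u₁ p₁ with h₁ | h₁
    · have hL : μ ((U₁ ⁻¹' {u₁} ∩ U₂ ⁻¹' {u₂}) ∩
          ((fun ω => (X₁ ω, Y₁ ω)) ⁻¹' {p₁} ∩ (fun ω => (X₂ ω, Y₂ ω)) ⁻¹' {p₂})) = 0 := by
        refine measure_mono_null ?_ h₁
        intro ω hω
        exact ⟨hω.1.1, hω.2.1⟩
      have hR : (μ ((fun ω => (X₁ ω, Y₁ ω)) ⁻¹' {p₁} ∩ U₁ ⁻¹' {u₁})).toReal = 0 := by
        rw [Set.inter_comm, h₁]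
        simp
      rw [hL, hR]
      simp
    rcases hdetP₂ u₂ p₂ with h₂ | h₂
    · have hL : μ ((U₁ ⁻¹' {u₁} ∩ U₂ ⁻¹' {u₂}) ∩
          ((fun ω => (X₁ ω, Y₁ ω)) ⁻¹' {p₁} ∩ (fun ω => (X₂ ω, Y₂ ω)) ⁻¹' {p₂})) = 0 := by
        refine measure_mono_null ?_ h₂
        intro ω hω
        exact ⟨hω.1.2, hω.2.2⟩
      have hR : (μ ((fun ω => (X₂ ω, Y₂ ω)) ⁻¹' {p₂} ∩ U₂ ⁻¹' {u₂})).toReal = 0 := by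
        rw [Set.inter_comm, h₂]
        simp
      rw [hL, hR]
      simp
    · have hfull := gk_det_pair_full μ (hU₁ u₁) (hU₂ u₂) h₁ h₂
      rw [hfull]
      have e := hindep p₁ p₂
      rw [e]
      rw [Set.inter_comm ((fun ω => (X₁ ω, Y₁ ω)) ⁻¹' {p₁}) (U₁ ⁻¹' {u₁}),
        Set.inter_comm ((fun ω => (X₂ ω, Y₂ ω)) ⁻¹' {p₂}) (U₂ ⁻¹' {u₂}), h₁, h₂]
  have hUind : ∀ (u₁ : 𝒰₁) (u₂ : 𝒰₂),
      (μ (U₁ ⁻¹' {u₁} ∩ U₂ ⁻¹' {u₂})).toReal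
        = (μ (U₁ ⁻¹' {u₁})).toReal * (μ (U₂ ⁻¹' {u₂})).toReal := by
    intro u₁ u₂
    calc (μ (U₁ ⁻¹' {u₁} ∩ U₂ ⁻¹' {u₂})).toReal
        = ∑ p₁ : 𝒳₁ × 𝒴₁, (μ ((fun ω => (X₁ ω, Y₁ ω)) ⁻¹' {p₁} ∩
            (U₁ ⁻¹' {u₁} ∩ U₂ ⁻¹' {u₂}))).toReal := (gk_sum_inter_fiber' μ hP₁ _).symm
      _ = ∑ p₁ : 𝒳₁ × 𝒴₁, ∑ p₂ : 𝒳₂ × 𝒴₂,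
            (μ ((fun ω => (X₂ ω, Y₂ ω)) ⁻¹' {p₂} ∩ ((fun ω => (X₁ ω, Y₁ ω)) ⁻¹' {p₁} ∩
              (U₁ ⁻¹' {u₁} ∩ U₂ ⁻¹' {u₂})))).toReal :=
          Finset.sum_congr rfl fun p₁ _ => (gk_sum_inter_fiber' μ hP₂ _).symm
      _ = ∑ p₁ : 𝒳₁ × 𝒴₁, ∑ p₂ : 𝒳₂ × 𝒴₂,
            (μ ((fun ω => (X₁ ω, Y₁ ω)) ⁻¹' {p₁} ∩ U₁ ⁻¹' {u₁})).toReal *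
            (μ ((fun ω => (X₂ ω, Y₂ ω)) ⁻¹' {p₂} ∩ U₂ ⁻¹' {u₂})).toReal :=
          Finset.sum_congr rfl fun p₁ _ => Finset.sum_congr rfl fun p₂ _ =>
            hterm u₁ u₂ p₁ p₂
      _ = (∑ p₁ : 𝒳₁ × 𝒴₁, (μ ((fun ω => (X₁ ω, Y₁ ω)) ⁻¹' {p₁} ∩ U₁ ⁻¹' {u₁})).toReal) *
          (∑ p₂ : 𝒳₂ × 𝒴₂, (μ ((fun ω => (X₂ ω, Y₂ ω)) ⁻¹' {p₂} ∩ U₂ ⁻¹' {u₂})).toReal) := by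
          rw [Finset.sum_mul_sum]
      _ = (μ (U₁ ⁻¹' {u₁})).toReal * (μ (U₂ ⁻¹' {u₂})).toReal := by
          rw [gk_sum_inter_fiber' μ hP₁, gk_sum_inter_fiber' μ hP₂]
  refine ⟨𝒰₁ × 𝒰₂, inferInstance, fun ω => (U₁ ω, U₂ ω), gk_dmeasurable_pair hU₁ hU₂,
    ?_, ?_, ?_⟩
  · refine (gk_condEnt_zero_iff μ (gk_dmeasurable_pair hX₁ hX₂)
      (gk_dmeasurable_pair hU₁ hU₂)).mpr ?_
    rintro ⟨u₁, u₂⟩ ⟨x₁, x₂⟩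
    rw [gk_pair_preimage U₁ U₂, gk_pair_preimage X₁ X₂]
    exact gk_det_pair μ (hU₁ u₁) (hU₂ u₂) (hdetX₁ u₁ x₁) (hdetX₂ u₂ x₂)
  · refine (gk_condEnt_zero_iff μ (gk_dmeasurable_pair hY₁ hY₂)
      (gk_dmeasurable_pair hU₁ hU₂)).mpr ?_
    rintro ⟨u₁, u₂⟩ ⟨y₁, y₂⟩
    rw [gk_pair_preimage U₁ U₂, gk_pair_preimage Y₁ Y₂]
    exact gk_det_pair μ (hU₁ u₁) (hU₂ u₂) (hdetY₁ u₁ y₁) (hdetY₂ u₂ y₂)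
  · exact (gk_ent_pair_of_indep μ hU₁ hU₂ hUind).ge
end

section
/- Achievability of the two-variable Shannon region (Γ₂* = Γ₂, inner bound direction): Let R₁, R₂, R₃ be nonnegative real numbers with R₁ ≤ R₃, R₂ ≤ R₃, and R₃ ≤ R₁ + R₂. Then there exist a probability space and random variables U₁, U₂ taking values in finite (or countable) sets such that H(U₁) = R₁, H(U₂) = R₂, and H(U₁,U₂) = R₃. -/
open MeasureTheory

noncomputable def phi (x : ℝ) : ℝ := -(x * Real.logb 2 x)

lemma phi_zero : phi 0 = 0 := by simp [phi]

lemma phi_mul (a b : ℝ) : phi (a * b) = b * phi a + a * phi b := by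
  rcases eq_or_ne a 0 with rfl | ha
  · simp [phi]
  rcases eq_or_ne b 0 with rfl | hb
  · simp [phi]
  simp only [phi, Real.logb, Real.log_mul ha hb]
  ring

lemma sum_phi_mul {S T : Type*} [Fintype S] [Fintype T] (f : S → ℝ) (g : T → ℝ)
    (hf : ∑ s, f s = 1) (hg : ∑ t, g t = 1) :
    ∑ s, ∑ t, phi (f s * g t) = (∑ s, phi (f s)) + ∑ t, phi (g t) := by
  simp only [phi_mul, Finset.sum_add_distrib, ← Finset.sum_mul, ← Finset.mul_sum, hg]
  rw [hf]; ring

lemma sum3_phi {A B C : Type*} [Fintype A] [Fintype B] [Fintype C]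
    (f : A → ℝ) (g : B → ℝ) (t : C → ℝ)
    (hf : ∑ x, f x = 1) (hg : ∑ y, g y = 1) (ht : ∑ z, t z = 1) :
    ∑ x, ∑ y, ∑ z, phi (f x * g y * t z)
      = ((∑ x, phi (f x)) + ∑ y, phi (g y)) + ∑ z, phi (t z) := by
  have h2 : ∑ p : B × C, g p.1 * t p.2 = 1 := by
    rw [Fintype.sum_prod_type]
    simp only [← Finset.mul_sum, ht, mul_one, hg]
  have key := sum_phi_mul f (fun p : B × C => g p.1 * t p.2) hf h2
  simp only [Fintype.sum_prod_type] at key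
  have key2 := sum_phi_mul g t hg ht
  simp only [mul_assoc]
  rw [key, key2]
  ring

lemma toMeasure_preimage {Ω : Type*} [Fintype Ω] (W : Ω → ℝ) (hW : ∀ ω, 0 ≤ W ω)
    (hW1 : ∑ ω, ENNReal.ofReal (W ω) = 1) {S : Type*} [DecidableEq S] (X : Ω → S) (s : S) :
    ((@PMF.toMeasure Ω ⊤ (PMF.ofFintype (fun ω => ENNReal.ofReal (W ω)) hW1)) (X ⁻¹' {s})).toReal
      = ∑ ω ∈ Finset.univ.filter (fun ω => X ω = s), W ω := by
  letI : MeasurableSpace Ω := ⊤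
  rw [PMF.toMeasure_apply (hs := MeasurableSpace.measurableSet_top)]
  rw [tsum_fintype]
  rw [Finset.sum_filter]
  have : ∀ ω, (X ⁻¹' {s}).indicator (⇑(PMF.ofFintype (fun ω => ENNReal.ofReal (W ω)) hW1)) ω
      = if X ω = s then ENNReal.ofReal (W ω) else 0 := by
    intro ω
    by_cases h : X ω = s <;> simp [Set.indicator, h, PMF.ofFintype_apply]
  simp only [this]
  rw [ENNReal.toReal_sum (by intro ω _; split <;> simp [ENNReal.ofReal_ne_top])]
  congr 1
  funext ω
  split
  · exact ENNReal.toReal_ofReal (hW ω)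
  · simp

lemma ent_eq_sum_phi {Ω : Type*} [Fintype Ω] (W : Ω → ℝ) (hW : ∀ ω, 0 ≤ W ω)
    (hW1 : ∑ ω, ENNReal.ofReal (W ω) = 1) {S : Type*} [Fintype S] [DecidableEq S] (X : Ω → S) :
    @ent Ω ⊤ (@PMF.toMeasure Ω ⊤ (PMF.ofFintype (fun ω => ENNReal.ofReal (W ω)) hW1)) S X
      = ∑ s, phi (∑ ω ∈ Finset.univ.filter (fun ω => X ω = s), W ω) := by
  unfold ent
  rw [tsum_fintype]
  apply Finset.sum_congr rfl
  intro s _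
  rw [toMeasure_preimage W hW hW1 X s]
  rfl

lemma phi_eq (x : ℝ) : phi x = Real.negMulLog x / Real.log 2 := by
  simp [phi, Real.negMulLog, Real.logb]
  ring

/-- key single-variable realizability -/
lemma exists_weights (r : ℝ) (hr : 0 ≤ r) :
    ∃ n : ℕ, ∃ w : Fin n → ℝ, (∀ i, 0 ≤ w i) ∧ (∑ i, w i = 1) ∧ (∑ i, phi (w i) = r) := by
  obtain ⟨k, hk⟩ : ∃ k : ℕ, r * Real.log 2 ≤ Real.log (2 ^ k) := by
    refine ⟨⌈r⌉₊, ?_⟩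
    rw [Real.log_pow]
    have := Nat.le_ceil r
    nlinarith [Real.log_pos (by norm_num : (1:ℝ) < 2)]
  set m : ℕ := 2 ^ k + 1 with hm
  have hm2 : 2 ≤ m := by have : 1 ≤ 2^k := Nat.one_le_two_pow; omega
  have hm1 : (1:ℝ) ≤ (m:ℝ) - 1 := by
    have : (2:ℝ) ≤ m := by exact_mod_cast hm2
    linarith
  -- the entropy function
  set F : ℝ → ℝ := fun p => Real.negMulLog p + ((m:ℝ) - 1) * Real.negMulLog ((1 - p) / ((m:ℝ) - 1)) with hF
  have hcont : Continuous F := by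
    apply Real.continuous_negMulLog.add
    exact continuous_const.mul (Real.continuous_negMulLog.comp (by continuity))
  have hF1 : F 1 = 0 := by simp [hF, Real.negMulLog]
  have hFm : F (1 / m) = Real.log m := by
    have hmpos : (0:ℝ) < m := by positivity
    have : (1 - 1 / (m:ℝ)) / ((m:ℝ) - 1) = 1 / m := by
      field_simp
    rw [hF]
    simp only [this]
    simp only [Real.negMulLog]
    have hlog : Real.log (1 / (m:ℝ)) = -Real.log m := by
      rw [Real.log_div one_ne_zero (ne_of_gt hmpos), Real.log_one]; ring
    rw [hlog]
    field_simp
    ring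
  have hrange : r * Real.log 2 ∈ Set.Icc (F 1) (F (1/m)) := by
    constructor
    · rw [hF1]; positivity
    · rw [hFm]
      calc r * Real.log 2 ≤ Real.log (2 ^ k) := hk
        _ ≤ Real.log m := by
            apply Real.log_le_log (by positivity)
            simp [hm]
  have hle : (1:ℝ)/m ≤ 1 := by
    rw [div_le_one (by positivity)]
    exact_mod_cast Nat.one_le_iff_ne_zero.mpr (by omega)
  obtain ⟨p, hpmem, hpF⟩ := intermediate_value_Icc' hle hcont.continuousOn hrange
  -- now build the weights
  refine ⟨m, fun i => if i = 0 then p else (1 - p) / ((m:ℝ) - 1), ?_, ?_, ?_⟩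
  · intro i
    have h1 : 0 ≤ p := le_trans (by positivity) hpmem.1
    have h2 : p ≤ 1 := hpmem.2
    by_cases h : i = 0 <;> simp [h]
    · exact h1
    · have : (0:ℝ) < (m:ℝ) - 1 := by linarith
      apply div_nonneg (by linarith) (by linarith)
  · have key : ∀ i : Fin m, (if i = 0 then p else (1 - p) / ((m:ℝ) - 1)) =
        (1 - p) / ((m:ℝ) - 1) + (if i = 0 then p - (1 - p) / ((m:ℝ) - 1) else 0) := by
      intro i; by_cases h : i = 0 <;> simp [h]
    simp only [key, Finset.sum_add_distrib, Finset.sum_const, Finset.card_univ,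
      Fintype.card_fin, nsmul_eq_mul, Finset.sum_ite_eq', Finset.mem_univ, if_true]
    have hmne : (m:ℝ) - 1 ≠ 0 := by linarith
    field_simp
    ring
  · have key : ∀ i : Fin m, phi (if i = 0 then p else (1 - p) / ((m:ℝ) - 1)) =
        phi ((1 - p) / ((m:ℝ) - 1)) + (if i = 0 then phi p - phi ((1 - p) / ((m:ℝ) - 1)) else 0) := by
      intro i; by_cases h : i = 0 <;> simp [h]
    simp only [key, Finset.sum_add_distrib, Finset.sum_const, Finset.card_univ,
      Fintype.card_fin, nsmul_eq_mul, Finset.sum_ite_eq', Finset.mem_univ, if_true]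
    have hlog2 : Real.log 2 ≠ 0 := by
      exact ne_of_gt (Real.log_pos (by norm_num))
    have : (m:ℝ) * phi ((1 - p) / ((m:ℝ) - 1)) + (phi p - phi ((1 - p) / ((m:ℝ) - 1)))
        = F p / Real.log 2 := by
      rw [hF]
      simp only [phi_eq]
      field_simp
      ring
    rw [this, hpF]
    field_simp

/-- Achievability of the two-variable Shannon region (inner bound direction of
`Γ₂* = Γ₂`). -/
theorem gamma_two_achievability (R₁ R₂ R₃ : ℝ)
    (h₁ : 0 ≤ R₁) (h₂ : 0 ≤ R₂) (h₃ : 0 ≤ R₃)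
    (h₁₃ : R₁ ≤ R₃) (h₂₃ : R₂ ≤ R₃) (h₃₁₂ : R₃ ≤ R₁ + R₂) :
    ∃ (Ω : Type) (_ : MeasurableSpace Ω) (μ : Measure Ω) (_ : IsProbabilityMeasure μ)
      (𝒰₁ 𝒰₂ : Type) (_ : Countable 𝒰₁) (_ : Countable 𝒰₂)
      (U₁ : Ω → 𝒰₁) (U₂ : Ω → 𝒰₂),
      DMeasurable U₁ ∧ DMeasurable U₂ ∧
      ent μ U₁ = R₁ ∧ ent μ U₂ = R₂ ∧ ent μ (fun ω => (U₁ ω, U₂ ω)) = R₃ := by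
  obtain ⟨n₁, f, hf0, hf1, hfE⟩ := exists_weights (R₃ - R₂) (by linarith)
  obtain ⟨n₂, g, hg0, hg1, hgE⟩ := exists_weights (R₃ - R₁) (by linarith)
  obtain ⟨n₃, t, ht0, ht1, htE⟩ := exists_weights (R₁ + R₂ - R₃) (by linarith)
  set W : Fin n₁ × Fin n₂ × Fin n₃ → ℝ := fun ω => f ω.1 * g ω.2.1 * t ω.2.2 with hWdef
  have hWnn : ∀ ω, 0 ≤ W ω := fun ω => mul_nonneg (mul_nonneg (hf0 _) (hg0 _)) (ht0 _)
  have hW1 : ∑ ω, ENNReal.ofReal (W ω) = 1 := by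
    rw [← ENNReal.ofReal_sum_of_nonneg (fun i _ => hWnn i)]
    have : ∑ ω, W ω = 1 := by
      simp only [hWdef, Fintype.sum_prod_type, ← Finset.sum_mul, ← Finset.mul_sum,
        ht1, mul_one, hg1, hf1]
    rw [this, ENNReal.ofReal_one]
  refine ⟨Fin n₁ × Fin n₂ × Fin n₃, ⊤,
    @PMF.toMeasure _ ⊤ (PMF.ofFintype (fun ω => ENNReal.ofReal (W ω)) hW1),
    @PMF.toMeasure.isProbabilityMeasure _ ⊤ _,
    Fin n₁ × Fin n₃, Fin n₂ × Fin n₃, inferInstance, inferInstance,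
    fun ω => (ω.1, ω.2.2), fun ω => (ω.2.1, ω.2.2),
    fun _ => MeasurableSpace.measurableSet_top,
    fun _ => MeasurableSpace.measurableSet_top, ?_, ?_, ?_⟩
  · -- H(U₁) = R₁
    rw [ent_eq_sum_phi W hWnn hW1]
    have key : ∀ s : Fin n₁ × Fin n₃,
        (∑ ω ∈ Finset.univ.filter (fun ω : Fin n₁ × Fin n₂ × Fin n₃ => (ω.1, ω.2.2) = s), W ω)
          = f s.1 * t s.2 := by
      rintro ⟨x, z⟩
      rw [Finset.sum_filter]
      simp only [Fintype.sum_prod_type, Prod.mk.injEq, ite_and, hWdef,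
        Finset.sum_ite_irrel, Finset.sum_const_zero,
        Finset.sum_ite_eq', Finset.mem_univ, if_true]
      rw [← Finset.sum_mul, ← Finset.mul_sum, hg1, mul_one]
    simp only [key]
    rw [Fintype.sum_prod_type, sum_phi_mul f t hf1 ht1, hfE, htE]
    ring
  · -- H(U₂) = R₂
    rw [ent_eq_sum_phi W hWnn hW1]
    have key : ∀ s : Fin n₂ × Fin n₃,
        (∑ ω ∈ Finset.univ.filter (fun ω : Fin n₁ × Fin n₂ × Fin n₃ => (ω.2.1, ω.2.2) = s), W ω)
          = g s.1 * t s.2 := by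
      rintro ⟨y, z⟩
      rw [Finset.sum_filter]
      simp only [Fintype.sum_prod_type, Prod.mk.injEq, ite_and, hWdef,
        Finset.sum_ite_irrel, Finset.sum_const_zero,
        Finset.sum_ite_eq', Finset.mem_univ, if_true]
      rw [← Finset.sum_mul, ← Finset.sum_mul, hf1, one_mul]
    simp only [key]
    rw [Fintype.sum_prod_type, sum_phi_mul g t hg1 ht1, hgE, htE]
    ring
  · -- joint
    rw [ent_eq_sum_phi W hWnn hW1]
    have key : ∀ s : (Fin n₁ × Fin n₃) × (Fin n₂ × Fin n₃),
        (∑ ω ∈ Finset.univ.filter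
            (fun ω : Fin n₁ × Fin n₂ × Fin n₃ => ((ω.1, ω.2.2), (ω.2.1, ω.2.2)) = s), W ω)
          = if s.1.2 = s.2.2 then f s.1.1 * g s.2.1 * t s.1.2 else 0 := by
      rintro ⟨⟨x, z⟩, ⟨y, z'⟩⟩
      rw [Finset.sum_filter]
      simp only [Fintype.sum_prod_type, Prod.mk.injEq, ite_and, hWdef,
        Finset.sum_ite_irrel, Finset.sum_const_zero,
        Finset.sum_ite_eq', Finset.mem_univ, if_true]
    simp only [key]
    simp only [Fintype.sum_prod_type, apply_ite phi, phi_zero,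
      Finset.sum_ite_eq, Finset.mem_univ, if_true]
    have swap : ∀ x1 : Fin n₁, (∑ z : Fin n₃, ∑ y : Fin n₂, phi (f x1 * g y * t z))
        = ∑ y : Fin n₂, ∑ z : Fin n₃, phi (f x1 * g y * t z) :=
      fun _ => Finset.sum_comm
    simp only [swap]
    rw [sum3_phi f g t hf1 hg1 ht1, hfE, hgE, htE]
    ring
end
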